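/- arXiv:1605.05747 — 4 statements merged into one kernel-verified Lean document; each statement's English description precedes it below -/
import Mathlib

section
/- Letting H₉ be the graph defined below, for every ε > 0 there exists N such that for all n ≥ N, Dist(n, Forb(H₉)) ≤ ((3 − √5)/4 + ε) · binom(n,2). (Equivalently, lim sup_{n→∞} Dist(n, Forb(H₉)) / binom(n,2) ≤ (3 − √5)/4.) -/
open Filter

/-- The edit distance between two simple graphs on the same finite vertex set:
the number of unordered pairs that are an edge in exactly one of the two graphs. -/
noncomputable def editDist {V : Type} [Fintype V] (G G' : SimpleGraph V) : ℕ :=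
  (symmDiff G.edgeSet G'.edgeSet).ncard

/-- A graph `G` is `H`-free if there is no graph embedding of `H` into `G`. -/
def IsHFree {W V : Type} (H : SimpleGraph W) (G : SimpleGraph V) : Prop :=
  ¬ Nonempty (H ↪g G)

/-- `Dist(G, Forb(H))`: minimum edit distance from `G` to an `H`-free graph on the
same vertex set. -/
noncomputable def distForb {W V : Type} [Fintype V] (H : SimpleGraph W)
    (G : SimpleGraph V) : ℕ :=
  sInf { d | ∃ G' : SimpleGraph V, IsHFree H G' ∧ d = editDist G G' }

/-- `Dist(n, Forb(H))`: maximum of `Dist(G, Forb(H))` over `n`-vertex graphs `G`. -/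
noncomputable def distForbN {W : Type} (H : SimpleGraph W) (n : ℕ) : ℕ :=
  sSup { d | ∃ G : SimpleGraph (Fin n), d = distForb H G }


/-- The graph `H₉` on vertex set `ℤ/9ℤ`: distinct `i`, `j` are adjacent iff
`i - j ≡ ±1` or `±2 (mod 9)`, or both `i` and `j` are divisible by `3`. -/
def H9 : SimpleGraph (ZMod 9) :=
  SimpleGraph.fromRel (fun i j => i - j = 1 ∨ i - j = 2 ∨ (3 ∣ i ∧ 3 ∣ j))

/-!
Colour the vertices of `G` independently at random with four classes of probabilities
`p, p, q, q`, where `p = (3 - √5) / 4` and `q = (√5 - 1) / 4`, delete every edge inside a class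
and join the first two classes completely. `H₉` has no proper 4-colouring in which two colour
classes are completely joined, so the result is `H₉`-free; the expected number of edits is
`(5 - 2√5) / 2` per edge and `(7 - 3√5) / 4` per non-edge of `G`. Alternatively, split the
vertices uniformly at random into two cliques: the triangle `{1, 4, 7}` of the complement of `H₉`
rules out an embedding, at an expected cost of `1 / 2` per non-edge. The mixture of the two bounds
with weights `(5 + √5) / 10` and `(5 - √5) / 10` costs `(3 - √5) / 4` per pair of vertices.
-/

open Finset

section EditDistance

variable {V W : Type} [Fintype V]

theorem distForb_le_editDist {H : SimpleGraph W} {G G' : SimpleGraph V} (hG' : IsHFree H G') :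
    distForb H G ≤ editDist G G' :=
  Nat.sInf_le ⟨G', hG', rfl⟩

theorem distForbN_le {H : SimpleGraph W} {n : ℕ} {c : ℝ}
    (h : ∀ G : SimpleGraph (Fin n), (distForb H G : ℝ) ≤ c) : (distForbN H n : ℝ) ≤ c := by
  have hbdd : BddAbove {d | ∃ G : SimpleGraph (Fin n), d = distForb H G} :=
    ((Set.finite_range (distForb H)).subset (by rintro _ ⟨G, rfl⟩; exact ⟨G, rfl⟩)).bddAbove
  obtain ⟨G, hG⟩ : distForbN H n ∈ {d | ∃ G : SimpleGraph (Fin n), d = distForb H G} :=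
    Nat.sSup_mem ⟨_, ⊥, rfl⟩ hbdd
  exact hG ▸ h G

theorem card_edgeFinset_add_card_edgeFinset_compl [DecidableEq V] (G : SimpleGraph V)
    [DecidableRel G.Adj] : #G.edgeFinset + #Gᶜ.edgeFinset = (Fintype.card V).choose 2 := by
  rw [← SimpleGraph.card_edgeFinset_top_eq_card_choose_two, ← card_union_of_disjoint
    (SimpleGraph.disjoint_edgeFinset.2 disjoint_compl_right), ← SimpleGraph.edgeFinset_sup]
  congr!
  exact sup_compl_eq_top

end EditDistance

theorem exists_le_of_sum_mul_le {α : Type} [Fintype α] {w f : α → ℝ} {c : ℝ} (hw : ∀ a, 0 < w a)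
    (hw1 : ∑ a, w a = 1) (h : ∑ a, w a * f a ≤ c) : ∃ a, f a ≤ c := by
  have hne : (univ : Finset α).Nonempty := nonempty_of_sum_ne_zero (hw1 ▸ one_ne_zero)
  obtain ⟨a, -, ha⟩ := exists_le_of_sum_le hne (f := fun a => w a * f a) (g := fun a => w a * c)
    (by rwa [← sum_mul, hw1, one_mul])
  exact ⟨a, le_of_mul_le_mul_left ha (hw a)⟩

section ProductWeight

variable {V ι : Type} [Fintype V] (x : ι → ℝ)

/-- The probability of `σ` when every vertex independently picks class `i` with probability
`x i`. -/
def prodWeight (σ : V → ι) : ℝ := ∏ v, x (σ v)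

theorem prodWeight_pos (hx : ∀ i, 0 < x i) (σ : V → ι) : 0 < prodWeight x σ :=
  prod_pos fun v _ => hx (σ v)

variable [Fintype ι] [DecidableEq V]

theorem sum_prodWeight (hx : ∑ i, x i = 1) : ∑ σ : V → ι, prodWeight x σ = 1 := by
  simp [prodWeight, ← Fintype.prod_sum, hx]

theorem sum_prodWeight_of_apply_eq [DecidableEq ι] (hx : ∑ i, x i = 1) {u v : V} (huv : u ≠ v)
    (i j : ι) : ∑ σ : V → ι with (σ u, σ v) = (i, j), prodWeight x σ = x i * x j := by
  let y (w : V) (c : ι) : ℝ := if (w = u → c = i) ∧ (w = v → c = j) then x c else 0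
  have hy (σ : V → ι) : ∏ w, y w (σ w) = if (σ u, σ v) = (i, j) then prodWeight x σ else 0 := by
    simp only [y, Fintype.prod_ite_zero, prodWeight, forall_and, forall_eq, Prod.mk.injEq]
  calc ∑ σ : V → ι with (σ u, σ v) = (i, j), prodWeight x σ
      = ∑ σ : V → ι, ∏ w, y w (σ w) := by simp only [hy, sum_ite, sum_const_zero, add_zero]
    _ = ∏ w, ∑ c, y w c := (Fintype.prod_sum y).symm
    _ = x i * x j := by
      rw [Fintype.prod_eq_mul u v huv]
      · simp [y, huv, huv.symm]
      · rintro w ⟨hwu, hwv⟩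
        simp [y, hwu, hwv, hx]

theorem sum_prodWeight_mul_map [DecidableEq ι] (hx : ∑ i, x i = 1) {z : Sym2 V} (hz : ¬z.IsDiag)
    (f : Sym2 ι → ℝ) :
    ∑ σ : V → ι, prodWeight x σ * f (z.map σ) = ∑ i, ∑ j, x i * x j * f s(i, j) := by
  induction z using Sym2.ind with
  | h u v =>
  have huv : u ≠ v := by simpa using hz
  rw [← Fintype.sum_prod_type', ← sum_fiberwise univ (fun σ : V → ι => (σ u, σ v))]
  refine Fintype.sum_congr _ _ fun ⟨i, j⟩ => ?_
  rw [← sum_prodWeight_of_apply_eq x hx huv, sum_mul]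
  refine sum_congr rfl fun σ hσ => ?_
  simp only [mem_filter, Prod.mk.injEq] at hσ
  simp [hσ.2.1, hσ.2.2]

end ProductWeight

/-- A coloured regular graph on the classes `ι`: every pair of classes, a diagonal pair `s(i, i)`
included, is black, white, or (if neither) grey. -/
structure CRG (ι : Type) where
  black : Sym2 ι → Bool
  white : Sym2 ι → Bool
  disjoint : ∀ z, black z = true → white z = false

namespace CRG

variable {ι V W : Type} (K : CRG ι)

def realize (G : SimpleGraph V) (σ : V → ι) : SimpleGraph V where
  Adj u v := u ≠ v ∧ (K.black s(σ u, σ v) ∨ (K.white s(σ u, σ v) = false ∧ G.Adj u v))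
  symm := ⟨fun u v ⟨huv, h⟩ => ⟨huv.symm, by simpa only [Sym2.eq_swap, G.adj_comm] using h⟩⟩
  loopless := ⟨fun u h => h.1 rfl⟩

def Allows (adj : Prop) (z : Sym2 ι) : Prop :=
  (adj → K.white z = false) ∧ (¬adj → K.black z = false)

instance (adj : Prop) [Decidable adj] (z : Sym2 ι) : Decidable (K.Allows adj z) :=
  inferInstanceAs (Decidable (_ ∧ _))

def Compatible (H : SimpleGraph W) (φ : W → ι) : Prop :=
  ∀ ⦃i j⦄, i ≠ j → K.Allows (H.Adj i j) s(φ i, φ j)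

theorem isHFree_realize {H : SimpleGraph W} (hK : ∀ φ : W → ι, ¬K.Compatible H φ)
    (G : SimpleGraph V) (σ : V → ι) : IsHFree H (K.realize G σ) := by
  rintro ⟨e⟩
  refine hK (σ ∘ e) fun i j hij => ⟨fun hadj => ?_, fun hnadj => ?_⟩
  · obtain ⟨-, hb | ⟨hw, -⟩⟩ := e.map_adj_iff.2 hadj
    · exact K.disjoint _ hb
    · exact hw
  · by_contra hb
    exact hnadj (e.map_adj_iff.1 ⟨e.injective.ne hij, Or.inl (Bool.not_eq_false _ ▸ hb)⟩)

variable [Fintype V] [DecidableEq V]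

theorem editDist_realize_le (G : SimpleGraph V) [DecidableRel G.Adj] (σ : V → ι) :
    editDist G (K.realize G σ) ≤
      #{z ∈ G.edgeFinset | K.white (z.map σ)} + #{z ∈ Gᶜ.edgeFinset | K.black (z.map σ)} := by
  rw [editDist, symmDiff_def, ← Set.ncard_coe_finset, ← Set.ncard_coe_finset]
  refine (Set.ncard_union_le _ _).trans (add_le_add ?_ ?_) <;>
    refine Set.ncard_le_ncard ?_ (finite_toSet _) <;>
    intro z <;> induction z using Sym2.ind with
    | h u v =>
      simp only [Set.mem_sdiff, SimpleGraph.mem_edgeSet, coe_filter, SimpleGraph.mem_edgeFinset,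
        Set.mem_ofPred_eq, realize, Sym2.map_mk, SimpleGraph.compl_adj]
      grind [SimpleGraph.irrefl]

end CRG

section Density

variable {ι V : Type} [Fintype ι] [DecidableEq ι] [Fintype V] [DecidableEq V] (x : ι → ℝ)

def pairDensity (S : Sym2 ι → Bool) : ℝ := ∑ i, ∑ j, x i * x j * if S s(i, j) then 1 else 0

theorem sum_prodWeight_mul_card_filter (hx : ∑ i, x i = 1) (S : Sym2 ι → Bool)
    {s : Finset (Sym2 V)} (hs : ∀ z ∈ s, ¬z.IsDiag) :
    ∑ σ : V → ι, prodWeight x σ * #{z ∈ s | S (z.map σ)} = #s * pairDensity x S := by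
  simp only [natCast_card_filter, mul_sum]
  rw [sum_comm, ← nsmul_eq_mul, ← sum_const]
  refine sum_congr rfl fun z hz => ?_
  exact sum_prodWeight_mul_map x hx (hs z hz) fun z => if S z then 1 else 0

theorem CRG.distForb_le {W : Type} {H : SimpleGraph W} (K : CRG ι)
    (hK : ∀ φ : W → ι, ¬K.Compatible H φ) (hx0 : ∀ i, 0 < x i) (hx1 : ∑ i, x i = 1)
    (G : SimpleGraph V) [DecidableRel G.Adj] :
    (distForb H G : ℝ) ≤
      #G.edgeFinset * pairDensity x K.white + #Gᶜ.edgeFinset * pairDensity x K.black := by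
  have hdiag (G' : SimpleGraph V) [DecidableRel G'.Adj] : ∀ z ∈ G'.edgeFinset, ¬z.IsDiag :=
    fun z hz => G'.not_isDiag_of_mem_edgeSet (G'.mem_edgeFinset.1 hz)
  obtain ⟨σ, hσ⟩ := exists_le_of_sum_mul_le (prodWeight_pos x hx0) (sum_prodWeight x hx1)
    (f := fun σ : V → ι => (#{z ∈ G.edgeFinset | K.white (z.map σ)} : ℝ) +
      #{z ∈ Gᶜ.edgeFinset | K.black (z.map σ)}) (by
      simp only [mul_add, sum_add_distrib, sum_prodWeight_mul_card_filter x hx1 _ (hdiag _)]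
      exact le_rfl)
  calc (distForb H G : ℝ) ≤ editDist G (K.realize G σ) :=
        Nat.cast_le.2 (distForb_le_editDist (K.isHFree_realize hK G σ))
    _ ≤ _ := by exact_mod_cast K.editDist_realize_le G σ
    _ ≤ _ := hσ

end Density

section Search

variable {W ι : Type} (R : W → W → ι → ι → Bool) (cs : List ι)

/-- Backtracking search for a map extending `done` to the vertices `todo` such that `R` holds on
every pair of assigned vertices; the constraints are checked as soon as both ends are assigned. -/
def extendable : List (W × ι) → List W → Bool
  | _, [] => true
  | done, v :: todo => cs.any fun c =>
      done.all (fun p => R p.1 v p.2 c) && extendable ((v, c) :: done) todo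

theorem extendable_eq_true {φ : W → ι} (hφ : ∀ ⦃u v⦄, u ≠ v → R u v (φ u) (φ v))
    (hcs : ∀ c, c ∈ cs) : ∀ {todo : List W} {done : List (W × ι)}, todo.Nodup →
      (∀ p ∈ done, p.2 = φ p.1 ∧ p.1 ∉ todo) → extendable R cs done todo = true
  | [], _, _, _ => by simp [extendable]
  | v :: todo, done, hnd, hdone => by
    rw [List.nodup_cons] at hnd
    simp only [extendable, List.any_eq_true, Bool.and_eq_true, List.all_eq_true]
    refine ⟨φ v, hcs _, fun p hp => ?_, extendable_eq_true hφ hcs hnd.2 fun p hp => ?_⟩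
    · obtain ⟨h2, h1⟩ := hdone p hp
      exact h2 ▸ hφ fun h => h1 (h ▸ List.mem_cons_self)
    · rcases List.mem_cons.1 hp with rfl | hp
      · exact ⟨rfl, hnd.1⟩
      · exact ⟨(hdone p hp).1, fun h => (hdone p hp).2 (List.mem_cons_of_mem _ h)⟩

end Search

theorem CRG.not_compatible_of_extendable_eq_false {ι W : Type} (K : CRG ι) (H : SimpleGraph W)
    [DecidableRel H.Adj] {vs : List W} (hvs : vs.Nodup) (cs : List ι) (hcs : ∀ c, c ∈ cs)
    (h : extendable (fun u v a b => decide (K.Allows (H.Adj u v) s(a, b))) cs [] vs = false)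
    (φ : W → ι) : ¬K.Compatible H φ := fun hφ =>
  Bool.eq_false_iff.1 h <|
    extendable_eq_true _ cs (fun _ _ huv => decide_eq_true (hφ huv)) hcs hvs (by simp)

instance : DecidableRel H9.Adj := fun a b => decidable_of_iff' _ (SimpleGraph.fromRel_adj _ a b)

def joinedIndependentCRG : CRG (Fin 4) where
  black z := decide (z = s(0, 1))
  white z := decide z.IsDiag
  disjoint := by decide

def twoCliquesCRG : CRG (Fin 2) where
  black z := decide z.IsDiag
  white _ := false
  disjoint := by decide

theorem not_compatible_joinedIndependentCRG (φ : ZMod 9 → Fin 4) :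
    ¬joinedIndependentCRG.Compatible H9 φ :=
  joinedIndependentCRG.not_compatible_of_extendable_eq_false H9 (vs := List.finRange 9)
    (List.nodup_finRange 9) (List.finRange 4) List.mem_finRange (by decide) φ

theorem not_compatible_twoCliquesCRG (φ : ZMod 9 → Fin 2) : ¬twoCliquesCRG.Compatible H9 φ :=
  twoCliquesCRG.not_compatible_of_extendable_eq_false H9 (vs := List.finRange 9)
    (List.nodup_finRange 9) (List.finRange 2) List.mem_finRange (by decide) φ

theorem one_lt_sqrt_five : 1 < √5 := by
  rw [Real.lt_sqrt zero_le_one]; norm_num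

theorem sqrt_five_lt_three : √5 < 3 := by
  rw [Real.sqrt_lt' three_pos]; norm_num

theorem sq_sqrt_five : √5 ^ 2 = 5 := Real.sq_sqrt (by norm_num)

noncomputable def joinedIndependentWeights : Fin 4 → ℝ :=
  ![(3 - √5) / 4, (3 - √5) / 4, (√5 - 1) / 4, (√5 - 1) / 4]

theorem joinedIndependentWeights_pos (i : Fin 4) : 0 < joinedIndependentWeights i := by
  have := one_lt_sqrt_five
  have := sqrt_five_lt_three
  fin_cases i <;> simp [joinedIndependentWeights] <;> linarith

theorem sum_joinedIndependentWeights : ∑ i, joinedIndependentWeights i = 1 := by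
  simp [Fin.sum_univ_four, joinedIndependentWeights]
  ring

theorem pairDensity_joinedIndependent_white :
    pairDensity joinedIndependentWeights joinedIndependentCRG.white = (5 - 2 * √5) / 2 := by
  simp [pairDensity, Fin.sum_univ_four, joinedIndependentCRG, joinedIndependentWeights]
  linear_combination (1 / 4) * sq_sqrt_five

theorem pairDensity_joinedIndependent_black :
    pairDensity joinedIndependentWeights joinedIndependentCRG.black = (7 - 3 * √5) / 4 := by
  simp [pairDensity, Fin.sum_univ_four, joinedIndependentCRG, joinedIndependentWeights]
  linear_combination (1 / 8) * sq_sqrt_five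

theorem pairDensity_twoCliques_white : pairDensity (fun _ => 1 / 2) twoCliquesCRG.white = 0 := by
  simp [pairDensity, twoCliquesCRG]

theorem pairDensity_twoCliques_black :
    pairDensity (fun _ => 1 / 2) twoCliquesCRG.black = 1 / 2 := by
  simp [pairDensity, twoCliquesCRG]

theorem distForb_H9_le {V : Type} [Fintype V] (G : SimpleGraph V) :
    (distForb H9 G : ℝ) ≤ (3 - √5) / 4 * (Fintype.card V).choose 2 := by
  classical
  have hA := joinedIndependentCRG.distForb_le joinedIndependentWeights
    not_compatible_joinedIndependentCRG joinedIndependentWeights_pos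
    sum_joinedIndependentWeights G
  have hB := twoCliquesCRG.distForb_le (fun _ => 1 / 2) not_compatible_twoCliquesCRG
    (fun _ => one_half_pos) (by norm_num) G
  rw [pairDensity_joinedIndependent_white, pairDensity_joinedIndependent_black] at hA
  rw [pairDensity_twoCliques_white, pairDensity_twoCliques_black] at hB
  have hcard : (#G.edgeFinset : ℝ) + #Gᶜ.edgeFinset = (Fintype.card V).choose 2 := by
    exact_mod_cast card_edgeFinset_add_card_edgeFinset_compl G
  have hA' := mul_le_mul_of_nonneg_left hA (by positivity : 0 ≤ (5 + √5) / 10)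
  have hB' :=
    mul_le_mul_of_nonneg_left hB (by linarith [sqrt_five_lt_three] : 0 ≤ (5 - √5) / 10)
  linear_combination hA' + hB' + (3 - √5) / 4 * hcard -
    (#G.edgeFinset / 10 + 3 * #Gᶜ.edgeFinset / 40 : ℝ) * sq_sqrt_five

theorem editDistance_H9_upper :
    ∀ ε : ℝ, 0 < ε → ∃ N : ℕ, ∀ n : ℕ, N ≤ n →
      (distForbN H9 n : ℝ) ≤ ((3 - Real.sqrt 5) / 4 + ε) * (n.choose 2 : ℝ) := by
  intro ε hε
  refine ⟨0, fun n _ => distForbN_le fun G => ?_⟩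
  calc (distForb H9 G : ℝ) ≤ (3 - √5) / 4 * (Fintype.card (Fin n)).choose 2 := distForb_H9_le G
    _ ≤ _ := by
      rw [Fintype.card_fin]
      gcongr
      linarith
end

section
/- Let ℱ be a nonempty family of finite simple graphs and let a ≥ 1 and c ≥ 1 be integers such that the pair (a, c) is ℱ-admissible. Then for every ε > 0 there exists N such that for all n ≥ N, Dist(n, Forb(ℱ)) ≤ (1/(√a + √c)² + ε) · binom(n,2). -/
/-- A family of finite simple graphs, each presented on a vertex set `Fin n`. -/
abbrev GraphFam : Type := Set ((n : ℕ) × SimpleGraph (Fin n))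

/-- A graph `G` is `ℱ`-free if no member of `ℱ` embeds into `G`. -/
def FamFree (ℱ : GraphFam) {V : Type} (G : SimpleGraph V) : Prop :=
  ∀ F ∈ ℱ, ¬ Nonempty (F.2 ↪g G)

/-- `Dist(G, Forb(ℱ))`: minimum edit distance from `G` to an `ℱ`-free graph on
the same vertex set. -/
noncomputable def distFam (ℱ : GraphFam) {V : Type} [Fintype V] (G : SimpleGraph V) : ℕ :=
  sInf { d | ∃ G' : SimpleGraph V, FamFree ℱ G' ∧ d = editDist G G' }

/-- `Dist(n, Forb(ℱ))`: maximum of `Dist(G, Forb(ℱ))` over `n`-vertex graphs. -/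
noncomputable def distFamN (ℱ : GraphFam) (n : ℕ) : ℕ :=
  sSup { d | ∃ G : SimpleGraph (Fin n), d = distFam ℱ G }

/-- `F` admits a partition of its vertex set into `a` independent sets and `c`
cliques (parts may be empty). -/
def HasPartition {V : Type} (F : SimpleGraph V) (a c : ℕ) : Prop :=
  ∃ φ : V → Fin a ⊕ Fin c,
    (∀ (i : Fin a) (u v : V), φ u = Sum.inl i → φ v = Sum.inl i → ¬ F.Adj u v) ∧
    (∀ (j : Fin c) (u v : V), φ u = Sum.inr j → φ v = Sum.inr j → u ≠ v → F.Adj u v)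

/-- The pair `(a,c)` is `ℱ`-admissible if no `F ∈ ℱ` admits a partition of its
vertex set into `a` independent sets and `c` cliques. -/
def Admissible (ℱ : GraphFam) (a c : ℕ) : Prop :=
  ∀ F ∈ ℱ, ¬ HasPartition F.2 a c

/-!
Choose a class for each vertex independently: each of the `a` independent classes with
probability `x`, each of the `c` clique classes with probability `y`, where `a x + c y = 1`.
Emptying the independent classes and completing the clique classes, while keeping `G` between
classes, yields an `ℱ`-free graph, because an embedded `F ∈ ℱ` would inherit a partition into
`a` independent sets and `c` cliques. A pair of vertices is edited only when both ends land in
one class of the wrong type, which has probability at most `max (a x²) (c y²)`. The choice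
`x = 1 / (√a (√a + √c))`, `y = 1 / (√c (√a + √c))` makes both terms `1 / (√a + √c)²`, so some
choice edits at most `(n choose 2) / (√a + √c)²` pairs, for every `n`.
-/

open Finset
open scoped symmDiff

section Averaging

variable {ι V T : Type} [Fintype V] [Fintype T]

lemma exists_le_sum_mul [Fintype ι] {w f : ι → ℝ} (hw0 : ∀ i, 0 ≤ w i) (hw1 : ∑ i, w i = 1) :
    ∃ i, f i ≤ ∑ i, w i * f i := by
  obtain ⟨i, -, hi⟩ :=
    univ.exists_min_image f (nonempty_of_sum_ne_zero (by rw [hw1]; exact one_ne_zero))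
  refine ⟨i, ?_⟩
  calc f i = ∑ j, w j * f i := by rw [← sum_mul, hw1, one_mul]
    _ ≤ ∑ j, w j * f j :=
      sum_le_sum fun j _ => mul_le_mul_of_nonneg_left (hi j (mem_univ j)) (hw0 j)

variable [DecidableEq V] {p : T → ℝ}

lemma sum_prod_eq_one (hp : ∑ t, p t = 1) : ∑ χ : V → T, ∏ w, p (χ w) = 1 := by
  rw [← Fintype.prod_sum, hp, prod_const_one]

lemma sum_prod_mul_ite_and_eq [DecidableEq T] (hp : ∑ t, p t = 1) {u v : V} (huv : u ≠ v)
    (s : T) : ∑ χ : V → T, (∏ w, p (χ w)) * (if χ u = s ∧ χ v = s then 1 else 0) = p s ^ 2 := by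
  -- `q` kills every colour other than `s` at `u` and `v`, so the product of sums factorises.
  let q : V → T → ℝ := fun w t =>
    if w ∈ ({u, v} : Finset V) then (if t = s then p t else 0) else p t
  have hq : ∀ χ : V → T,
      (∏ w, p (χ w)) * (if χ u = s ∧ χ v = s then 1 else 0) = ∏ w, q w (χ w) := by
    intro χ
    split_ifs with h
    · rw [mul_one]
      refine prod_congr rfl fun w _ => ?_
      have hχ : w ∈ ({u, v} : Finset V) → χ w = s := by
        simp only [mem_insert, mem_singleton]
        rintro (rfl | rfl)
        exacts [h.1, h.2]
      simp only [q]
      split_ifs with hw hs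
      exacts [rfl, absurd (hχ hw) hs, rfl]
    · rw [mul_zero, eq_comm]
      rcases not_and_or.mp h with h | h
      · exact prod_eq_zero (mem_univ u) (by simp [q, h])
      · exact prod_eq_zero (mem_univ v) (by simp [q, h])
  have hsum : ∀ w, ∑ t, q w t = if w ∈ ({u, v} : Finset V) then p s else 1 := by
    intro w
    split_ifs with hw
    · simp only [q, if_pos hw, sum_ite_eq', mem_univ, if_true]
    · simp only [q, if_neg hw, hp]
  rw [sum_congr rfl fun χ _ => hq χ, ← Fintype.prod_sum, prod_congr rfl fun w _ => hsum w,
    prod_ite_mem, univ_inter, prod_const, card_pair huv]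

lemma sum_prod_mul_ite_and [DecidableEq T] (hp : ∑ t, p t = 1) {u v : V} (huv : u ≠ v)
    (P : T → Prop) [DecidablePred P] :
    ∑ χ : V → T, (∏ w, p (χ w)) * (if χ u = χ v ∧ P (χ u) then 1 else 0) =
      ∑ s, if P s then p s ^ 2 else 0 := by
  have hsplit : ∀ χ : V → T, (if χ u = χ v ∧ P (χ u) then (1 : ℝ) else 0) =
      ∑ s, if P s then (if χ u = s ∧ χ v = s then 1 else 0) else 0 := by
    intro χ
    rw [Fintype.sum_eq_single (χ u)]
    · by_cases h : P (χ u) <;> by_cases h' : χ u = χ v <;> simp [h, h', eq_comm]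
    · intro s hs
      split_ifs with h h' <;> simp_all
  simp_rw [hsplit, mul_sum]
  rw [sum_comm]
  refine sum_congr rfl fun s _ => ?_
  by_cases h : P s
  · simp only [if_pos h]
    exact sum_prod_mul_ite_and_eq hp huv s
  · simp only [if_neg h, mul_zero, sum_const_zero]

end Averaging

namespace SimpleGraph

variable {V : Type} {a c : ℕ}

/-- `G ∆ conflictGraph G φ` is `G` with every class `inl i` of `φ` made independent and every
class `inr j` made a clique. -/
def conflictGraph (G : SimpleGraph V) (φ : V → Fin a ⊕ Fin c) : SimpleGraph V where
  Adj u v := u ≠ v ∧ φ u = φ v ∧ (G.Adj u v ↔ (φ u).isLeft)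
  symm := ⟨fun _ _ ⟨huv, hφ, hG⟩ => ⟨huv.symm, hφ.symm, by rwa [G.adj_comm, ← hφ]⟩⟩
  loopless := ⟨fun _ h => h.1 rfl⟩

lemma adj_symmDiff_conflictGraph (G : SimpleGraph V) (φ : V → Fin a ⊕ Fin c) {u v : V}
    (huv : u ≠ v) (hφ : φ u = φ v) :
    (G ∆ conflictGraph G φ).Adj u v ↔ (φ u).isRight := by
  rw [symmDiff_def, sup_adj, sdiff_adj, sdiff_adj]
  simp only [conflictGraph, ne_eq, huv, not_false_eq_true, hφ, true_and]
  rcases φ v with i | j <;> simp [em]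

lemma edgeSet_symmDiff (G H : SimpleGraph V) : (G ∆ H).edgeSet = G.edgeSet ∆ H.edgeSet := by
  rw [symmDiff_def, symmDiff_def, edgeSet_sup, edgeSet_sdiff, edgeSet_sdiff]
  rfl

lemma editDist_symmDiff [Fintype V] (G H : SimpleGraph V) :
    editDist G (G ∆ H) = H.edgeSet.ncard := by
  rw [editDist, edgeSet_symmDiff, symmDiff_symmDiff_cancel_left]

lemma two_mul_ncard_edgeSet [Fintype V] (H : SimpleGraph V) [DecidableRel H.Adj] :
    2 * H.edgeSet.ncard = ∑ u, ∑ v, if H.Adj u v then 1 else 0 := by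
  rw [← coe_edgeFinset, Set.ncard_coe_finset, ← sum_degrees_eq_twice_card_edges]
  refine sum_congr rfl fun u _ => ?_
  rw [← card_neighborFinset_eq_degree, neighborFinset_eq_filter, card_filter]

lemma sum_prod_mul_ncard_conflictGraph_le [Fintype V] [DecidableEq V] (G : SimpleGraph V)
    {p : Fin a ⊕ Fin c → ℝ} (hp : ∑ s, p s = 1) :
    ∑ χ : V → Fin a ⊕ Fin c, (∏ w, p (χ w)) * (2 * (conflictGraph G χ).edgeSet.ncard : ℝ) ≤
      2 * (Fintype.card V).choose 2 * max (∑ i, p (.inl i) ^ 2) (∑ j, p (.inr j) ^ 2) := by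
  classical
  set m := max (∑ i, p (.inl i) ^ 2) (∑ j, p (.inr j) ^ 2)
  have hpair : ∀ u v, ∑ χ : V → Fin a ⊕ Fin c,
      (∏ w, p (χ w)) * (if (conflictGraph G χ).Adj u v then 1 else 0) ≤
        if u = v then 0 else m := by
    intro u v
    split_ifs with huv
    · simp [huv]
    calc _ = ∑ s, if (G.Adj u v ↔ s.isLeft) then p s ^ 2 else 0 := by
          convert sum_prod_mul_ite_and hp huv (fun t => G.Adj u v ↔ t.isLeft) using 4
          simp [conflictGraph, huv]
      _ ≤ m := by by_cases hG : G.Adj u v <;> simp [hG, Fintype.sum_sum_type, m]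
  have htwo : ∀ χ : V → Fin a ⊕ Fin c, (2 * (conflictGraph G χ).edgeSet.ncard : ℝ) =
      ∑ u, ∑ v, if (conflictGraph G χ).Adj u v then 1 else 0 := fun χ => by
    exact_mod_cast two_mul_ncard_edgeSet (conflictGraph G χ)
  calc ∑ χ : V → Fin a ⊕ Fin c, (∏ w, p (χ w)) * (2 * (conflictGraph G χ).edgeSet.ncard : ℝ)
      = ∑ u, ∑ v, ∑ χ : V → Fin a ⊕ Fin c,
          (∏ w, p (χ w)) * (if (conflictGraph G χ).Adj u v then 1 else 0) := by
        simp_rw [htwo, mul_sum]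
        rw [sum_comm]
        simp_rw [sum_comm (γ := V → Fin a ⊕ Fin c)]
    _ ≤ ∑ u : V, ∑ v : V, if u = v then 0 else m :=
        sum_le_sum fun u _ => sum_le_sum fun v _ => hpair u v
    _ = _ := by
        have hite : ∀ u v : V, (if u = v then 0 else m) = m - if u = v then m else 0 := by
          intro u v; split_ifs <;> simp
        simp only [hite, sum_sub_distrib, sum_ite_eq, mem_univ, if_true, sum_const, card_univ,
          nsmul_eq_mul, Nat.cast_choose_two]
        ring

end SimpleGraph

open SimpleGraph

section Bound

variable {V : Type} {a c : ℕ}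

theorem Admissible.famFree_symmDiff_conflictGraph {ℱ : GraphFam} (hadm : Admissible ℱ a c)
    (G : SimpleGraph V) (φ : V → Fin a ⊕ Fin c) : FamFree ℱ (G ∆ conflictGraph G φ) := by
  rintro F hF ⟨e⟩
  refine hadm F hF ⟨φ ∘ e, fun i u v hu hv hadj => ?_, fun j u v hu hv huv => ?_⟩
  · have h := adj_symmDiff_conflictGraph G φ (e.injective.ne hadj.ne) (hu.trans hv.symm)
    simp_all [e.map_adj_iff.mpr hadj]
  · rw [← e.map_adj_iff, adj_symmDiff_conflictGraph G φ (e.injective.ne huv) (hu.trans hv.symm)]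
    simp_all

theorem Admissible.distFam_le_of_weights [Fintype V] {ℱ : GraphFam} (hadm : Admissible ℱ a c)
    (G : SimpleGraph V) {p : Fin a ⊕ Fin c → ℝ} (hp0 : ∀ s, 0 ≤ p s) (hp1 : ∑ s, p s = 1) :
    (distFam ℱ G : ℝ) ≤
      max (∑ i, p (.inl i) ^ 2) (∑ j, p (.inr j) ^ 2) * (Fintype.card V).choose 2 := by
  classical
  obtain ⟨χ, hχ⟩ := exists_le_sum_mul (f := fun χ => (2 * (conflictGraph G χ).edgeSet.ncard : ℝ))
    (fun χ => prod_nonneg fun w _ => hp0 (χ w)) (sum_prod_eq_one hp1)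
  have hdist : distFam ℱ G ≤ (conflictGraph G χ).edgeSet.ncard := by
    rw [← editDist_symmDiff]
    exact Nat.sInf_le ⟨_, hadm.famFree_symmDiff_conflictGraph G χ, rfl⟩
  have hexp := hχ.trans (sum_prod_mul_ncard_conflictGraph_le G hp1)
  have hdist' : (distFam ℱ G : ℝ) ≤ (conflictGraph G χ).edgeSet.ncard := by exact_mod_cast hdist
  linarith

lemma exists_weights (hac : 0 < a + c) : ∃ p : Fin a ⊕ Fin c → ℝ, (∀ s, 0 ≤ p s) ∧
    ∑ s, p s = 1 ∧ max (∑ i, p (.inl i) ^ 2) (∑ j, p (.inr j) ^ 2) ≤ 1 / (√a + √c) ^ 2 := by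
  set S := √(a : ℝ) + √(c : ℝ)
  have hS : 0 < S := by
    rcases Nat.eq_zero_or_pos a with rfl | ha
    · simpa [S] using (show 0 < c by omega)
    · have : 0 < √(a : ℝ) := Real.sqrt_pos.mpr (by exact_mod_cast ha)
      positivity
  -- `Real.div_sqrt` holds at `m = 0` too (`0 / 0 = 0`), so a class count may vanish.
  have hsum : ∀ m : ℕ, (m : ℝ) * (1 / (√m * S)) = √m / S := fun m => by
    rw [mul_one_div, div_mul_eq_div_div, Real.div_sqrt]
  have hsq : ∀ m : ℕ, (m : ℝ) * (1 / (√m * S)) ^ 2 ≤ 1 / S ^ 2 := fun m => by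
    rw [sq, ← mul_assoc, hsum, div_mul_div_comm, mul_one, mul_comm, mul_assoc, ← sq]
    rcases (Real.sqrt_nonneg m).eq_or_lt with h | h
    · rw [← h, zero_mul, div_zero, one_div]
      positivity
    · rw [div_mul_cancel_left₀ h.ne', one_div]
  refine ⟨Sum.elim (fun _ => 1 / (√a * S)) (fun _ => 1 / (√c * S)), ?_, ?_, ?_⟩
  · rintro (i | j) <;> simp only [Sum.elim_inl, Sum.elim_inr] <;> positivity
  · simp only [Fintype.sum_sum_type, Sum.elim_inl, Sum.elim_inr, sum_const, card_univ,
      Fintype.card_fin, nsmul_eq_mul, hsum, ← add_div, S]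
    exact div_self hS.ne'
  · simpa only [Sum.elim_inl, Sum.elim_inr, sum_const, card_univ, Fintype.card_fin,
      nsmul_eq_mul, max_le_iff] using ⟨hsq a, hsq c⟩

theorem Admissible.distFam_le [Fintype V] {ℱ : GraphFam} (hadm : Admissible ℱ a c)
    (hac : 0 < a + c) (G : SimpleGraph V) :
    (distFam ℱ G : ℝ) ≤ 1 / (√a + √c) ^ 2 * (Fintype.card V).choose 2 := by
  obtain ⟨p, hp0, hp1, hmax⟩ := exists_weights hac
  exact (hadm.distFam_le_of_weights G hp0 hp1).trans (by gcongr)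

end Bound

lemma exists_distFamN_eq (ℱ : GraphFam) (n : ℕ) :
    ∃ G : SimpleGraph (Fin n), distFamN ℱ n = distFam ℱ G := by
  have hrange : { d | ∃ G : SimpleGraph (Fin n), d = distFam ℱ G } =
      Set.range (distFam ℱ (V := Fin n)) := by
    ext d; simp [eq_comm]
  rw [distFamN, hrange]
  obtain ⟨G, hG⟩ :=
    Nat.sSup_mem (Set.range_nonempty _) (Set.finite_range (distFam ℱ (V := Fin n))).bddAbove
  exact ⟨G, hG.symm⟩

theorem admissible_pair_bound_general (ℱ : GraphFam) (a c : ℕ)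
    (ha : 1 ≤ a) (hadm : Admissible ℱ a c) :
    ∀ ε : ℝ, 0 < ε → ∃ N : ℕ, ∀ n : ℕ, N ≤ n →
      (distFamN ℱ n : ℝ) ≤
        (1 / (Real.sqrt (a : ℝ) + Real.sqrt (c : ℝ)) ^ 2 + ε) * (n.choose 2 : ℝ) := by
  intro ε hε
  refine ⟨0, fun n _ => ?_⟩
  obtain ⟨G, hG⟩ := exists_distFamN_eq ℱ n
  calc (distFamN ℱ n : ℝ) ≤ 1 / (√a + √c) ^ 2 * (Fintype.card (Fin n)).choose 2 :=
        hG ▸ hadm.distFam_le (by omega) G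
    _ ≤ _ := by rw [Fintype.card_fin]; gcongr; linarith

theorem admissible_pair_bound (ℱ : GraphFam) (hne : ℱ.Nonempty) (a c : ℕ)
    (ha : 1 ≤ a) (hc : 1 ≤ c) (hadm : Admissible ℱ a c) :
    ∀ ε : ℝ, 0 < ε → ∃ N : ℕ, ∀ n : ℕ, N ≤ n →
      (distFamN ℱ n : ℝ) ≤
        (1 / (Real.sqrt (a : ℝ) + Real.sqrt (c : ℝ)) ^ 2 + ε) * (n.choose 2 : ℝ) :=
  admissible_pair_bound_general ℱ a c ha hadm
end

section
/- Let a ≥ 2 be an integer and let W and B be two simple graphs on a common finite vertex set V of size n, with the property that for every subset A ⊆ V with |A| = a, at least one of the following holds: (1) some edge of W has both endpoints in A; or (2) every vertex of A is incident to an edge of B whose other endpoint also lies in A. Then (a−1)·|E(W)| + |E(B)| ≥ ⌈n(n−a+1)/2⌉. -/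
open Finset

/-- Caro–Wei style lemma: if the sum of `1/(deg+1)` over a finite set exceeds `k`,
there is an independent subset of size `k+1`. -/
lemma caroWei_aux {V : Type} [Fintype V] [DecidableEq V] (W : SimpleGraph V)
    [DecidableRel W.Adj] :
    ∀ (k : ℕ) (S : Finset V), (k : ℚ) < ∑ u ∈ S, (1 : ℚ) / (W.degree u + 1) →
      ∃ I : Finset V, I ⊆ S ∧ I.card = k + 1 ∧ ∀ u ∈ I, ∀ w ∈ I, ¬ W.Adj u w := by
  intro k
  induction k with
  | zero =>
    intro S hS
    have hne : S.Nonempty := by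
      by_contra hc
      rw [not_nonempty_iff_eq_empty] at hc
      subst hc
      simp at hS
    obtain ⟨u, hu⟩ := hne
    refine ⟨{u}, by simpa using hu, by simp, ?_⟩
    intro x hx w hw
    simp only [mem_singleton] at hx hw
    subst hx; subst hw
    exact W.irrefl
  | succ k ih =>
    intro S hS
    have hne : S.Nonempty := by
      by_contra hc
      rw [not_nonempty_iff_eq_empty] at hc
      subst hc
      simp at hS
      have : (0:ℚ) ≤ (k:ℚ) + 1 := by positivity
      linarith
    obtain ⟨u, huS, humin⟩ := S.exists_min_image (fun w => W.degree w) hne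
    have hdpos : (0:ℚ) < (W.degree u : ℚ) + 1 := by positivity
    set T := S.filter (fun w => ¬ (W.Adj u w ∨ w = u)) with hT
    have hsplit := Finset.sum_filter_add_sum_filter_not S (fun w => W.Adj u w ∨ w = u)
      (fun w => (1:ℚ) / (W.degree w + 1))
    -- bound removed part by 1
    have hRsub : S.filter (fun w => W.Adj u w ∨ w = u) ⊆ insert u (W.neighborFinset u) := by
      intro w hw
      rw [mem_filter] at hw
      rcases hw.2 with h1 | h2
      · exact mem_insert_of_mem (by rwa [SimpleGraph.mem_neighborFinset])
      · subst h2; exact mem_insert_self _ _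
    have hRcard : (S.filter (fun w => W.Adj u w ∨ w = u)).card ≤ W.degree u + 1 := by
      calc (S.filter (fun w => W.Adj u w ∨ w = u)).card
          ≤ (insert u (W.neighborFinset u)).card := card_le_card hRsub
        _ ≤ (W.neighborFinset u).card + 1 := card_insert_le _ _
        _ = W.degree u + 1 := by rw [SimpleGraph.card_neighborFinset_eq_degree]
    have hRbound : ∑ w ∈ S.filter (fun w => W.Adj u w ∨ w = u), (1:ℚ)/(W.degree w + 1) ≤ 1 := by
      have hterm : ∀ w ∈ S.filter (fun w => W.Adj u w ∨ w = u),
          (1:ℚ)/(W.degree w + 1) ≤ 1/(W.degree u + 1) := by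
        intro w hw
        rw [mem_filter] at hw
        have : W.degree u ≤ W.degree w := humin w hw.1
        apply one_div_le_one_div_of_le hdpos
        have : (W.degree u : ℚ) ≤ W.degree w := by exact_mod_cast this
        linarith
      calc ∑ w ∈ S.filter (fun w => W.Adj u w ∨ w = u), (1:ℚ)/(W.degree w + 1)
          ≤ (S.filter (fun w => W.Adj u w ∨ w = u)).card • ((1:ℚ)/(W.degree u + 1)) :=
            Finset.sum_le_card_nsmul _ _ _ hterm
        _ = ((S.filter (fun w => W.Adj u w ∨ w = u)).card : ℚ) * (1/(W.degree u + 1)) := by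
            rw [nsmul_eq_mul]
        _ ≤ ((W.degree u : ℚ) + 1) * (1/(W.degree u + 1)) := by
            apply mul_le_mul_of_nonneg_right
            · exact_mod_cast hRcard
            · positivity
        _ = 1 := by field_simp
    have hTsum : (k:ℚ) < ∑ w ∈ T, (1:ℚ)/(W.degree w + 1) := by
      have : ∑ w ∈ S, (1:ℚ)/(W.degree w + 1) ≤ 1 + ∑ w ∈ T, (1:ℚ)/(W.degree w + 1) := by
        rw [← hsplit]
        have := hRbound
        simp only [hT]
        linarith
      push_cast at hS ⊢
      linarith
    obtain ⟨I', hI'sub, hI'card, hI'indep⟩ := ih T hTsum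
    have huT : u ∉ T := by
      intro hu
      rw [hT, mem_filter] at hu
      exact hu.2 (Or.inr rfl)
    have huI' : u ∉ I' := fun hu => huT (hI'sub hu)
    refine ⟨insert u I', ?_, ?_, ?_⟩
    · apply insert_subset huS
      exact hI'sub.trans (filter_subset _ _)
    · rw [card_insert_of_notMem huI', hI'card]
    · intro x hx w hw
      rcases mem_insert.1 hx with rfl | hxI
      · rcases mem_insert.1 hw with rfl | hwI
        · exact W.irrefl
        · have := hI'sub hwI
          rw [hT, mem_filter] at this
          intro hadj
          exact this.2 (Or.inl hadj)
      · rcases mem_insert.1 hw with rfl | hwI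
        · have := hI'sub hxI
          rw [hT, mem_filter] at this
          intro hadj
          exact this.2 (Or.inl hadj.symm)
        · exact hI'indep x hxI w hwI

/-- **Weighted Turán lemma.** If every `a`-subset of vertices contains a `W`-edge
or is spanned by its internal `B`-edges, then `(a-1)|E(W)| + |E(B)| ≥ ⌈n(n-a+1)/2⌉`. -/
theorem weighted_turan {V : Type} [Fintype V] (a : ℕ) (ha : 2 ≤ a)
    (W B : SimpleGraph V) (n : ℕ) (hn : Fintype.card V = n)
    (h : ∀ A : Finset V, A.card = a →
      (∃ u ∈ A, ∃ v ∈ A, W.Adj u v) ∨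
      (∀ v ∈ A, ∃ u ∈ A, B.Adj v u)) :
    ⌈((n : ℚ) * ((n : ℚ) - (a : ℚ) + 1)) / 2⌉ ≤
      ((a : ℤ) - 1) * (W.edgeSet.ncard : ℤ) + (B.edgeSet.ncard : ℤ) := by
  classical
  subst hn
  set n := Fintype.card V with hn
  set Sv : V → Finset V := fun v => univ.filter (fun u => u ≠ v ∧ ¬ W.Adj v u ∧ ¬ B.Adj v u)
    with hSv
  have hSv_mem : ∀ u v : V, u ∈ Sv v ↔ (u ≠ v ∧ ¬ W.Adj v u ∧ ¬ B.Adj v u) := by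
    intro u v; simp [hSv]
  have hSv_symm : ∀ u v : V, u ∈ Sv v ↔ v ∈ Sv u := by
    intro u v
    rw [hSv_mem, hSv_mem]
    constructor
    · rintro ⟨h1, h2, h3⟩
      exact ⟨h1.symm, fun hh => h2 hh.symm, fun hh => h3 hh.symm⟩
    · rintro ⟨h1, h2, h3⟩
      exact ⟨h1.symm, fun hh => h2 hh.symm, fun hh => h3 hh.symm⟩
  -- Key 1 : Caro-Wei sum over gray neighborhood is at most a - 2
  have key1 : ∀ v : V, ∑ u ∈ Sv v, (1:ℚ)/(W.degree u + 1) ≤ (a:ℚ) - 2 := by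
    intro v
    by_contra hc
    push_neg at hc
    have h2 : ((a - 2 : ℕ) : ℚ) < ∑ u ∈ Sv v, (1:ℚ)/(W.degree u + 1) := by
      rwa [Nat.cast_sub ha, Nat.cast_ofNat]
    obtain ⟨I, hIsub, hIcard, hIindep⟩ := caroWei_aux W (a - 2) (Sv v) h2
    have hvI : v ∉ I := by
      intro hv
      have := (hSv_mem v v).1 (hIsub hv)
      exact this.1 rfl
    have hAcard : (insert v I).card = a := by
      rw [card_insert_of_notMem hvI, hIcard]
      omega
    rcases h (insert v I) hAcard with ⟨p, hp, q, hq, hpq⟩ | h2'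
    · rcases mem_insert.1 hp with rfl | hpI
      · rcases mem_insert.1 hq with rfl | hqI
        · exact W.irrefl hpq
        · exact ((hSv_mem q p).1 (hIsub hqI)).2.1 hpq
      · rcases mem_insert.1 hq with rfl | hqI
        · exact ((hSv_mem p q).1 (hIsub hpI)).2.1 hpq.symm
        · exact hIindep p hpI q hqI hpq
    · obtain ⟨u, hu, hB⟩ := h2' v (mem_insert_self v I)
      rcases mem_insert.1 hu with rfl | huI
      · exact B.irrefl hB
      · exact ((hSv_mem u v).1 (hIsub huI)).2.2 hB
  -- Key 2 : n ≤ 1 + degW v + degB v + |Sv v|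
  have key2 : ∀ v : V, (n:ℚ) ≤ 1 + (W.degree v : ℚ) + (B.degree v : ℚ) + ((Sv v).card : ℚ) := by
    intro v
    have hsub : (univ : Finset V) ⊆
        insert v ((W.neighborFinset v ∪ B.neighborFinset v) ∪ Sv v) := by
      intro u _
      by_cases h1 : u = v
      · subst h1; exact mem_insert_self _ _
      by_cases h2 : W.Adj v u
      · exact mem_insert_of_mem (mem_union_left _ (mem_union_left _
          (by rwa [SimpleGraph.mem_neighborFinset])))
      by_cases h3 : B.Adj v u
      · exact mem_insert_of_mem (mem_union_left _ (mem_union_right _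
          (by rwa [SimpleGraph.mem_neighborFinset])))
      · exact mem_insert_of_mem (mem_union_right _ ((hSv_mem u v).2 ⟨h1, h2, h3⟩))
    have hcard : n ≤ 1 + (W.degree v + B.degree v + (Sv v).card) := by
      calc n = (univ : Finset V).card := by rw [card_univ]
        _ ≤ (insert v ((W.neighborFinset v ∪ B.neighborFinset v) ∪ Sv v)).card :=
            card_le_card hsub
        _ ≤ ((W.neighborFinset v ∪ B.neighborFinset v) ∪ Sv v).card + 1 := card_insert_le _ _
        _ ≤ ((W.neighborFinset v ∪ B.neighborFinset v).card + (Sv v).card) + 1 := by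
            have := card_union_le (W.neighborFinset v ∪ B.neighborFinset v) (Sv v)
            omega
        _ ≤ ((W.neighborFinset v).card + (B.neighborFinset v).card + (Sv v).card) + 1 := by
            have := card_union_le (W.neighborFinset v) (B.neighborFinset v)
            omega
        _ = 1 + (W.degree v + B.degree v + (Sv v).card) := by
            rw [SimpleGraph.card_neighborFinset_eq_degree,
              SimpleGraph.card_neighborFinset_eq_degree]
            omega
    have h5 : (n:ℚ) ≤ ((1 + (W.degree v + B.degree v + (Sv v).card) : ℕ) : ℚ) :=
      Nat.cast_le.mpr hcard
    push_cast at h5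
    linarith
  -- Key 3 : ∑ v |Sv v| ≤ (a-2) (∑ degW + n) via symmetrization
  set F : V → V → ℚ := fun v u => ((W.degree v : ℚ) + 1) / ((W.degree u : ℚ) + 1) with hF
  have hsum_ite : ∀ (G : V → V → ℚ), ∀ v : V,
      ∑ u ∈ Sv v, G v u = ∑ u : V, if u ∈ Sv v then G v u else 0 := by
    intro G v
    rw [hSv]
    rw [Finset.sum_filter]
    apply Finset.sum_congr rfl
    intro u _
    congr 1
    simp [hSv]
  have hLsymm : ∑ v : V, ∑ u ∈ Sv v, F v u = ∑ v : V, ∑ u ∈ Sv v, F u v := by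
    calc ∑ v : V, ∑ u ∈ Sv v, F v u
        = ∑ v : V, ∑ u : V, (if u ∈ Sv v then F v u else 0) := by
          exact Finset.sum_congr rfl fun v _ => hsum_ite F v
      _ = ∑ u : V, ∑ v : V, (if u ∈ Sv v then F v u else 0) := Finset.sum_comm
      _ = ∑ v : V, ∑ u : V, (if v ∈ Sv u then F u v else 0) := rfl
      _ = ∑ v : V, ∑ u : V, (if u ∈ Sv v then F u v else 0) := by
          apply Finset.sum_congr rfl; intro v _
          apply Finset.sum_congr rfl; intro u _
          congr 1
          rw [hSv_symm]
      _ = ∑ v : V, ∑ u ∈ Sv v, F u v := by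
          exact Finset.sum_congr rfl fun v _ => (hsum_ite (fun v u => F u v) v).symm
  have hFlb : ∀ v u : V, (2:ℚ) ≤ F v u + F u v := by
    intro v u
    have hp : (0:ℚ) < (W.degree v : ℚ) + 1 := by positivity
    have hq : (0:ℚ) < (W.degree u : ℚ) + 1 := by positivity
    rw [hF]
    rw [div_add_div _ _ (ne_of_gt hq) (ne_of_gt hp), le_div_iff₀ (by positivity)]
    nlinarith [sq_nonneg (((W.degree v : ℚ) + 1) - ((W.degree u : ℚ) + 1))]
  have key3 : ∑ v : V, ((Sv v).card : ℚ) ≤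
      ((a:ℚ) - 2) * (∑ v : V, ((W.degree v : ℚ) + 1)) := by
    have h2L : 2 * ∑ v : V, ((Sv v).card : ℚ) ≤ 2 * ∑ v : V, ∑ u ∈ Sv v, F v u := by
      calc 2 * ∑ v : V, ((Sv v).card : ℚ) = ∑ v : V, ∑ u ∈ Sv v, (2:ℚ) := by
            rw [Finset.mul_sum]
            apply Finset.sum_congr rfl
            intro v _
            rw [Finset.sum_const, nsmul_eq_mul, mul_comm]
        _ ≤ ∑ v : V, ∑ u ∈ Sv v, (F v u + F u v) := by
            apply Finset.sum_le_sum; intro v _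
            apply Finset.sum_le_sum; intro u _
            exact hFlb v u
        _ = (∑ v : V, ∑ u ∈ Sv v, F v u) + (∑ v : V, ∑ u ∈ Sv v, F u v) := by
            rw [← Finset.sum_add_distrib]
            apply Finset.sum_congr rfl
            intro v _
            rw [← Finset.sum_add_distrib]
        _ = 2 * ∑ v : V, ∑ u ∈ Sv v, F v u := by rw [← hLsymm]; ring
    have hL : ∑ v : V, ((Sv v).card : ℚ) ≤ ∑ v : V, ∑ u ∈ Sv v, F v u := by linarith
    calc ∑ v : V, ((Sv v).card : ℚ) ≤ ∑ v : V, ∑ u ∈ Sv v, F v u := hL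
      _ = ∑ v : V, ((W.degree v : ℚ) + 1) * ∑ u ∈ Sv v, (1:ℚ)/(W.degree u + 1) := by
          apply Finset.sum_congr rfl
          intro v _
          rw [Finset.mul_sum]
          apply Finset.sum_congr rfl
          intro u _
          rw [hF]
          field_simp
      _ ≤ ∑ v : V, ((W.degree v : ℚ) + 1) * ((a:ℚ) - 2) := by
          apply Finset.sum_le_sum
          intro v _
          apply mul_le_mul_of_nonneg_left (key1 v) (by positivity)
      _ = ((a:ℚ) - 2) * (∑ v : V, ((W.degree v : ℚ) + 1)) := by
          rw [Finset.mul_sum]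
          apply Finset.sum_congr rfl
          intro v _
          ring
  -- handshake
  have hW : ∑ v : V, (W.degree v : ℚ) = 2 * (W.edgeFinset.card : ℚ) := by
    exact_mod_cast W.sum_degrees_eq_twice_card_edges
  have hB : ∑ v : V, (B.degree v : ℚ) = 2 * (B.edgeFinset.card : ℚ) := by
    exact_mod_cast B.sum_degrees_eq_twice_card_edges
  -- Assemble
  have hsum2 : (n:ℚ) * n ≤ ∑ v : V, (1 + (W.degree v : ℚ) + (B.degree v : ℚ) + ((Sv v).card : ℚ)) := by
    calc (n:ℚ) * n = ∑ _v : V, (n:ℚ) := by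
          rw [Finset.sum_const, card_univ, ← hn, nsmul_eq_mul]
      _ ≤ _ := Finset.sum_le_sum fun v _ => key2 v
  have hmain : (n:ℚ) * ((n:ℚ) - (a:ℚ) + 1) ≤
      2 * ((a:ℚ) - 1) * (W.edgeFinset.card : ℚ) + 2 * (B.edgeFinset.card : ℚ) := by
    have e1 : ∑ v : V, (1 + (W.degree v : ℚ) + (B.degree v : ℚ) + ((Sv v).card : ℚ))
        = (n:ℚ) + 2 * (W.edgeFinset.card : ℚ) + 2 * (B.edgeFinset.card : ℚ)
          + ∑ v : V, ((Sv v).card : ℚ) := by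
      rw [Finset.sum_add_distrib, Finset.sum_add_distrib, Finset.sum_add_distrib,
        Finset.sum_const, card_univ, ← hn, nsmul_eq_mul, mul_one, hW, hB]
    have e2 : ∑ v : V, ((W.degree v : ℚ) + 1) = 2 * (W.edgeFinset.card : ℚ) + (n:ℚ) := by
      rw [Finset.sum_add_distrib, Finset.sum_const, card_univ, ← hn, nsmul_eq_mul, mul_one, hW]
    have h3 := key3
    rw [e2] at h3
    have h4 := hsum2
    rw [e1] at h4
    nlinarith [h3, h4]
  -- convert ncard to edgeFinset.card
  have hcW : (W.edgeSet.ncard : ℤ) = (W.edgeFinset.card : ℤ) := by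
    congr 1
    rw [SimpleGraph.edgeFinset, Set.ncard_eq_toFinset_card']
  have hcB : (B.edgeSet.ncard : ℤ) = (B.edgeFinset.card : ℤ) := by
    congr 1
    rw [SimpleGraph.edgeFinset, Set.ncard_eq_toFinset_card']
  rw [hcW, hcB, Int.ceil_le]
  push_cast
  rw [div_le_iff₀ (by norm_num : (0:ℚ) < 2)]
  nlinarith [hmain]
end

section
/- Let k ≥ 1 and let M be a symmetric k×k real matrix all of whose entries are nonnegative and all of whose diagonal entries are strictly positive. Let v be the minimum of uᵀMu over the simplex {u ∈ ℝᵏ : u ≥ 0 coordinatewise, Σᵢ uᵢ = 1} (this minimum exists by compactness). Then there exists a nonempty subset S ⊆ {1,…,k} such that the principal submatrix M_S = (M_{ij})_{i,j ∈ S} is invertible, v = 1/(𝟙ᵀ M_S⁻¹ 𝟙) where 𝟙 is the all-ones vector indexed by S, and v also equals the minimum of wᵀ M_S w over the simplex {w ∈ ℝ^S : w ≥ 0 coordinatewise, Σ_{i∈S} wᵢ = 1}. -/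
/-!
Take a minimizer `u` of `uᵀMu` on the simplex whose support `S` is minimal under inclusion.
Moving mass between two coordinates of `u` shows that `(Mu)ᵢ = v` for all `i ∈ S`, i.e.
`M_S u_S = v 𝟙`; hence `1 = 𝟙ᵀu_S = v 𝟙ᵀM_S⁻¹𝟙` once `M_S` is invertible. If `M_S` were singular,
a kernel vector `z` of `M_S`, extended by zero, would satisfy `𝟙ᵀz = zᵀMu = uᵀMz = 0` (using
`v > 0`) and `zᵀMz = 0`, so the form is constant along `u + tz`; moving until a coordinate
vanishes yields a minimizer with smaller support. Since `u` lives on the face of the simplex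
spanned by `S`, `v` is also the minimum over that face.
-/

open Matrix Finset Function Filter Topology

variable {ι : Type*}

section ExtendByZero

variable {S : Finset ι}

theorem support_extend_coe_subset (w : S → ℝ) : support (extend Subtype.val w 0) ⊆ S := by
  intro i hi
  by_contra hiS
  exact hi (by rw [extend_apply' _ _ _ (by rintro ⟨j, rfl⟩; exact hiS j.2)]; simp)

theorem extend_coe_restrict {u : ι → ℝ} (hS : support u ⊆ S) :
    extend Subtype.val (fun i : S => u i) 0 = u := by
  funext i
  by_cases hi : i ∈ S
  · exact Subtype.val_injective.extend_apply _ _ ⟨i, hi⟩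
  · rw [extend_apply' _ _ _ (by rintro ⟨j, rfl⟩; exact hi j.2), Pi.zero_apply,
      notMem_support.mp fun h => hi (hS h)]

variable [Fintype ι]

theorem dotProduct_extend_coe (x : ι → ℝ) (w : S → ℝ) :
    x ⬝ᵥ extend Subtype.val w 0 = (fun i : S => x i) ⬝ᵥ w := by
  rw [dotProduct, dotProduct, ← Fintype.sum_subset (s := S), ← sum_coe_sort]
  · exact sum_congr rfl fun i _ => by rw [Subtype.val_injective.extend_apply]
  · exact fun i hi => support_extend_coe_subset w (right_ne_zero_of_mul hi)

theorem sum_extend_coe (w : S → ℝ) : ∑ i, extend Subtype.val w 0 i = ∑ i, w i := by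
  simpa only [dotProduct, Pi.one_apply, one_mul] using dotProduct_extend_coe 1 w

theorem mulVec_extend_coe (M : Matrix ι ι ℝ) (w : S → ℝ) (i : S) :
    (M *ᵥ extend Subtype.val w 0) i = (M.submatrix (↑) (↑) *ᵥ w) i :=
  dotProduct_extend_coe _ w

theorem dotProduct_mulVec_extend_coe (M : Matrix ι ι ℝ) (w : S → ℝ) :
    extend Subtype.val w 0 ⬝ᵥ M *ᵥ extend Subtype.val w 0 = w ⬝ᵥ M.submatrix (↑) (↑) *ᵥ w := by
  rw [dotProduct_comm, dotProduct_extend_coe, dotProduct_comm]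
  exact congrArg _ (funext (mulVec_extend_coe M w))

theorem extend_coe_mem_stdSimplex {w : S → ℝ} (hw : w ∈ stdSimplex ℝ S) :
    extend Subtype.val w 0 ∈ stdSimplex ℝ ι := by
  refine ⟨fun i => ?_, (sum_extend_coe w).trans hw.2⟩
  by_cases hi : i ∈ S
  · rw [show i = ((⟨i, hi⟩ : S) : ι) from rfl, Subtype.val_injective.extend_apply]
    exact hw.1 _
  · rw [extend_apply' _ _ _ (by rintro ⟨j, rfl⟩; exact hi j.2)]; rfl

end ExtendByZero

variable [Fintype ι]

theorem Matrix.dotProduct_mulVec_self_eq_sum (M : Matrix ι ι ℝ) (u : ι → ℝ) :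
    u ⬝ᵥ M *ᵥ u = ∑ i, ∑ j, u i * M i j * u j := by
  simp only [dotProduct, mulVec, mul_sum, mul_assoc]

theorem setOf_exists_eq_image_stdSimplex (M : Matrix ι ι ℝ) :
    {x : ℝ | ∃ u : ι → ℝ, (∀ i, 0 ≤ u i) ∧ (∑ i, u i) = 1 ∧ x = ∑ i, ∑ j, u i * M i j * u j} =
      (fun u => u ⬝ᵥ M *ᵥ u) '' stdSimplex ℝ ι := by
  ext x
  simp only [Set.mem_ofPred_eq, Set.mem_image, stdSimplex, dotProduct_mulVec_self_eq_sum, eq_comm,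
    and_assoc]

theorem Matrix.IsSymm.dotProduct_mulVec_comm {M : Matrix ι ι ℝ} (hM : M.IsSymm) (u w : ι → ℝ) :
    u ⬝ᵥ M *ᵥ w = w ⬝ᵥ M *ᵥ u := by
  rw [dotProduct_mulVec, ← mulVec_transpose, hM.eq, dotProduct_comm]

theorem Matrix.IsSymm.dotProduct_mulVec_add_smul {M : Matrix ι ι ℝ} (hM : M.IsSymm)
    (u w : ι → ℝ) (t : ℝ) :
    (u + t • w) ⬝ᵥ M *ᵥ (u + t • w) =
      u ⬝ᵥ M *ᵥ u + 2 * t * (w ⬝ᵥ M *ᵥ u) + t ^ 2 * (w ⬝ᵥ M *ᵥ w) := by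
  simp only [mulVec_add, mulVec_smul, add_dotProduct, dotProduct_add, smul_dotProduct,
    dotProduct_smul, smul_eq_mul, hM.dotProduct_mulVec_comm u w]
  ring

theorem nonneg_of_forall_mem_Ioc {a b c : ℝ} (hc : 0 < c)
    (h : ∀ t ∈ Set.Ioc 0 c, 0 ≤ t * a + t ^ 2 * b) : 0 ≤ a := by
  have hlim : Tendsto (fun t => a + t * b) (𝓝[>] 0) (𝓝 a) := by
    refine tendsto_nhdsWithin_of_tendsto_nhds ?_
    exact (by fun_prop : Continuous fun t => a + t * b).tendsto' 0 a (by simp)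
  refine ge_of_tendsto hlim ?_
  filter_upwards [Ioc_mem_nhdsGT hc] with t ht
  refine nonneg_of_mul_nonneg_right ?_ ht.1
  linarith [h t ht]

theorem add_smul_single_sub_single_mem_stdSimplex [DecidableEq ι] {u : ι → ℝ}
    (hu : u ∈ stdSimplex ℝ ι) (i j : ι) {t : ℝ} (ht₀ : 0 ≤ t) (ht : t ≤ u j) :
    u + t • (Pi.single i 1 - Pi.single j 1) ∈ stdSimplex ℝ ι := by
  refine ⟨fun x => ?_, ?_⟩
  · have hx := hu.1 x
    simp only [Pi.add_apply, Pi.smul_apply, Pi.sub_apply, smul_eq_mul, Pi.single_apply]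
    split_ifs with hxi hxj <;> subst_vars <;> nlinarith
  · simp [sum_add_distrib, ← mul_sum, hu.2]

theorem IsMinOn.mulVec_le_of_pos {M : Matrix ι ι ℝ} (hM : M.IsSymm) {u : ι → ℝ}
    (hmin : IsMinOn (fun u => u ⬝ᵥ M *ᵥ u) (stdSimplex ℝ ι) u) (hu : u ∈ stdSimplex ℝ ι)
    {j : ι} (hj : 0 < u j) (i : ι) : (M *ᵥ u) j ≤ (M *ᵥ u) i := by
  classical
  set w : ι → ℝ := Pi.single i 1 - Pi.single j 1
  have hwu : w ⬝ᵥ M *ᵥ u = (M *ᵥ u) i - (M *ᵥ u) j := by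
    simp [w, sub_dotProduct]
  suffices 0 ≤ 2 * ((M *ᵥ u) i - (M *ᵥ u) j) by linarith
  refine nonneg_of_forall_mem_Ioc hj (b := w ⬝ᵥ M *ᵥ w) fun t ht => ?_
  have := isMinOn_iff.mp hmin _ (add_smul_single_sub_single_mem_stdSimplex hu i j ht.1.le ht.2)
  rw [hM.dotProduct_mulVec_add_smul, hwu] at this
  linarith

theorem IsMinOn.mulVec_eq_of_pos {M : Matrix ι ι ℝ} (hM : M.IsSymm) {u : ι → ℝ}
    (hmin : IsMinOn (fun u => u ⬝ᵥ M *ᵥ u) (stdSimplex ℝ ι) u) (hu : u ∈ stdSimplex ℝ ι)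
    {j : ι} (hj : 0 < u j) : (M *ᵥ u) j = u ⬝ᵥ M *ᵥ u := by
  have h : ∀ i, u i * (M *ᵥ u) i = u i * (M *ᵥ u) j := fun i => by
    rcases (hu.1 i).eq_or_lt with hi | hi
    · simp [← hi]
    · rw [le_antisymm (hmin.mulVec_le_of_pos hM hu hi j) (hmin.mulVec_le_of_pos hM hu hj i)]
  rw [dotProduct, sum_congr rfl fun i _ => h i, ← sum_mul, hu.2, one_mul]

theorem dotProduct_mulVec_pos_of_mem_stdSimplex {M : Matrix ι ι ℝ}
    (hnonneg : ∀ i j, 0 ≤ M i j) (hdiag : ∀ i, 0 < M i i) {u : ι → ℝ}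
    (hu : u ∈ stdSimplex ℝ ι) : 0 < u ⬝ᵥ M *ᵥ u := by
  obtain ⟨j, hj⟩ : ∃ j, 0 < u j := by
    by_contra! h
    linarith [hu.2, sum_nonpos fun i (_ : i ∈ univ) => h i]
  have hterm : ∀ i k, 0 ≤ u i * M i k * u k := fun i k =>
    mul_nonneg (mul_nonneg (hu.1 i) (hnonneg i k)) (hu.1 k)
  rw [dotProduct_mulVec_self_eq_sum]
  calc 0 < u j * M j j * u j := by have := hdiag j; positivity
    _ ≤ ∑ k, u j * M j k * u k := single_le_sum (fun k _ => hterm j k) (mem_univ j)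
    _ ≤ ∑ i, ∑ k, u i * M i k * u k :=
      single_le_sum (f := fun i => ∑ k, u i * M i k * u k)
        (fun i _ => sum_nonneg fun k _ => hterm i k) (mem_univ j)

theorem exists_add_smul_nonneg_support_ssubset {u z : ι → ℝ} (hu : ∀ i, 0 ≤ u i)
    (hz : support z ⊆ support u) (hneg : ∃ i, z i < 0) :
    ∃ t : ℝ, (∀ i, 0 ≤ (u + t • z) i) ∧ support (u + t • z) ⊂ support u := by
  obtain ⟨i₁, hi₁, hmin⟩ := (univ.filter (z · < 0)).exists_min_image (fun i => u i / -z i)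
    (by obtain ⟨i, hi⟩ := hneg; exact ⟨i, by simpa using hi⟩)
  rw [mem_filter] at hi₁
  set t := u i₁ / -z i₁
  have ht : 0 ≤ t := div_nonneg (hu i₁) (by linarith [hi₁.2])
  have hzero : (u + t • z) i₁ = 0 := by
    simp only [Pi.add_apply, Pi.smul_apply, smul_eq_mul, t]
    rw [div_neg, neg_mul, div_mul_cancel₀ _ hi₁.2.ne, add_neg_cancel]
  refine ⟨t, fun i => ?_, ?_⟩
  · simp only [Pi.add_apply, Pi.smul_apply, smul_eq_mul]
    rcases le_or_gt 0 (z i) with hzi | hzi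
    · nlinarith [hu i]
    · have := hmin i (mem_filter.mpr ⟨mem_univ i, hzi⟩)
      rw [le_div_iff₀ (by linarith)] at this
      linarith
  · have hsub : support (u + t • z) ⊆ support u := fun i hi => by
      by_contra hui
      have hzi : z i = 0 := notMem_support.mp fun h => hui (hz h)
      exact hi (by simp [notMem_support.mp hui, hzi])
    exact (Set.ssubset_iff_of_subset hsub).mpr ⟨i₁, hz hi₁.2.ne, fun h => h hzero⟩

theorem IsMinOn.exists_isMinOn_support_ssubset {M : Matrix ι ι ℝ}
    (hM : M.IsSymm) {u : ι → ℝ} (hmin : IsMinOn (fun u => u ⬝ᵥ M *ᵥ u) (stdSimplex ℝ ι) u)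
    (hu : u ∈ stdSimplex ℝ ι) (hpos : 0 < u ⬝ᵥ M *ᵥ u) {z : ι → ℝ} (hz₀ : z ≠ 0)
    (hzu : support z ⊆ support u) (hMz : ∀ i ∈ support u, (M *ᵥ z) i = 0) :
    ∃ u' ∈ stdSimplex ℝ ι, IsMinOn (fun u => u ⬝ᵥ M *ᵥ u) (stdSimplex ℝ ι) u' ∧
      support u' ⊂ support u := by
  have hvanish : ∀ x : ι → ℝ, support x ⊆ support u → x ⬝ᵥ M *ᵥ z = 0 := fun x hx =>
    sum_eq_zero fun i _ => by
      by_cases hi : i ∈ support u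
      · rw [hMz i hi, mul_zero]
      · rw [notMem_support.mp fun h => hi (hx h), zero_mul]
  have hcross : z ⬝ᵥ M *ᵥ u = 0 := by
    rw [hM.dotProduct_mulVec_comm]; exact hvanish u subset_rfl
  have hsum : ∑ i, z i = 0 := by
    have : z ⬝ᵥ M *ᵥ u = (u ⬝ᵥ M *ᵥ u) * ∑ i, z i := by
      rw [mul_sum, dotProduct]
      refine sum_congr rfl fun i _ => ?_
      by_cases hi : z i = 0
      · simp [hi]
      · rw [hmin.mulVec_eq_of_pos hM hu ((hu.1 i).lt_of_ne' (hzu hi)), mul_comm]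
    rw [hcross, zero_eq_mul] at this
    exact this.resolve_left hpos.ne'
  obtain ⟨t, hnonneg, hss⟩ : ∃ t : ℝ, (∀ i, 0 ≤ (u + t • z) i) ∧
      support (u + t • z) ⊂ support u := by
    refine exists_add_smul_nonneg_support_ssubset hu.1 hzu ?_
    by_contra! h
    exact hz₀ (funext fun i => (sum_eq_zero_iff_of_nonneg fun i _ => h i).mp hsum i (mem_univ i))
  have hval : (u + t • z) ⬝ᵥ M *ᵥ (u + t • z) = u ⬝ᵥ M *ᵥ u := by
    rw [hM.dotProduct_mulVec_add_smul, hcross, hvanish z hzu]; ring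
  refine ⟨u + t • z, ⟨hnonneg, ?_⟩, fun x hx => ?_, hss⟩
  · simp [sum_add_distrib, ← mul_sum, hsum, hu.2]
  · simpa [hval] using hmin hx

theorem IsMinOn.isLeast_submatrix {S : Finset ι} {M : Matrix ι ι ℝ} {u : ι → ℝ}
    (hmin : IsMinOn (fun u => u ⬝ᵥ M *ᵥ u) (stdSimplex ℝ ι) u) (hu : u ∈ stdSimplex ℝ ι)
    (hS : support u ⊆ S) :
    IsLeast ((fun w => w ⬝ᵥ M.submatrix (↑) (↑) *ᵥ w) '' stdSimplex ℝ S) (u ⬝ᵥ M *ᵥ u) := by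
  have hext := extend_coe_restrict hS
  refine ⟨⟨fun i => u i, ⟨fun i => hu.1 i, ?_⟩, ?_⟩, ?_⟩
  · rw [← sum_extend_coe, hext, hu.2]
  · dsimp only
    rw [← dotProduct_mulVec_extend_coe, hext]
  · rintro _ ⟨w, hw, rfl⟩
    dsimp only
    rw [← dotProduct_mulVec_extend_coe]
    exact hmin (extend_coe_mem_stdSimplex hw)

theorem IsMinOn.submatrix_mulVec_restrict {S : Finset ι} {M : Matrix ι ι ℝ} (hM : M.IsSymm)
    {u : ι → ℝ} (hmin : IsMinOn (fun u => u ⬝ᵥ M *ᵥ u) (stdSimplex ℝ ι) u)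
    (hu : u ∈ stdSimplex ℝ ι) (hS : (S : Set ι) = support u) :
    M.submatrix ((↑) : S → ι) (↑) *ᵥ (fun i : S => u i) = fun _ => u ⬝ᵥ M *ᵥ u := by
  funext i
  have hi : u i ≠ 0 := mem_support.mp (hS ▸ mem_coe.mpr i.2)
  rw [← mulVec_extend_coe, extend_coe_restrict hS.ge,
    hmin.mulVec_eq_of_pos hM hu ((hu.1 i).lt_of_ne' hi)]

theorem eq_one_div_sum_inv_of_mulVec_eq_const {n : Type*} [Fintype n] [DecidableEq n]
    {A : Matrix n n ℝ} (hA : IsUnit A) {w : n → ℝ} {c : ℝ} (hw : A *ᵥ w = fun _ => c)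
    (hsum : ∑ i, w i = 1) : c = 1 / ∑ i, ∑ j, A⁻¹ i j := by
  have hsol : w = A⁻¹ *ᵥ fun _ => c := by
    rw [← hw, mulVec_mulVec, nonsing_inv_mul _ ((isUnit_iff_isUnit_det A).mp hA), one_mulVec]
  refine eq_one_div_of_mul_eq_one_right ?_
  rw [← hsum, hsol, sum_mul]
  simp [mulVec, dotProduct, sum_mul]

theorem exists_isMinOn_isUnit_submatrix_support [DecidableEq ι] {M : Matrix ι ι ℝ}
    (hM : M.IsSymm) (hpos : ∀ u ∈ stdSimplex ℝ ι, 0 < u ⬝ᵥ M *ᵥ u) {u₀ : ι → ℝ}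
    (hmin₀ : IsMinOn (fun u => u ⬝ᵥ M *ᵥ u) (stdSimplex ℝ ι) u₀) (hu₀ : u₀ ∈ stdSimplex ℝ ι) :
    ∃ u ∈ stdSimplex ℝ ι, IsMinOn (fun u => u ⬝ᵥ M *ᵥ u) (stdSimplex ℝ ι) u ∧
      ∃ S : Finset ι, (S : Set ι) = support u ∧ IsUnit (M.submatrix (↑) (↑) : Matrix S S ℝ) := by
  obtain ⟨u, ⟨hu, hmin⟩, hsmallest⟩ := (InvImage.wf support wellFounded_lt).has_min
    {u | u ∈ stdSimplex ℝ ι ∧ IsMinOn (fun u => u ⬝ᵥ M *ᵥ u) (stdSimplex ℝ ι) u} ⟨u₀, hu₀, hmin₀⟩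
  refine ⟨u, hu, hmin, univ.filter (u · ≠ 0), coe_filter_univ _, ?_⟩
  rw [isUnit_iff_isUnit_det, isUnit_iff_ne_zero]
  intro hdet
  obtain ⟨z, hz₀, hz⟩ := exists_mulVec_eq_zero_iff.mpr hdet
  have hext₀ : extend Subtype.val z 0 ≠ 0 := fun h =>
    hz₀ (funext fun i => by simpa [Subtype.val_injective.extend_apply] using congrFun h i)
  have hext_support : support (extend Subtype.val z 0) ⊆ support u := by
    simpa using support_extend_coe_subset z
  have hext_ker : ∀ i ∈ support u, (M *ᵥ extend Subtype.val z 0) i = 0 := fun i hi => by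
    simpa [← mulVec_extend_coe] using congrFun hz ⟨i, by simpa using hi⟩
  obtain ⟨u', hu', hmin', hss⟩ := hmin.exists_isMinOn_support_ssubset hM hu (hpos u hu)
    hext₀ hext_support hext_ker
  exact hsmallest u' ⟨hu', hmin'⟩ hss

theorem qp_lemma_general (k : ℕ) (M : Matrix (Fin k) (Fin k) ℝ)
    (hsymm : M.IsSymm) (hnonneg : ∀ i j, 0 ≤ M i j) (hdiag : ∀ i, 0 < M i i)
    (v : ℝ)
    (hv : IsLeast { x : ℝ | ∃ u : Fin k → ℝ, (∀ i, 0 ≤ u i) ∧ (∑ i, u i) = 1 ∧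
      x = ∑ i, ∑ j, u i * M i j * u j } v) :
    ∃ S : Finset (Fin k), S.Nonempty ∧
      IsUnit (M.submatrix (fun i : S => (i : Fin k)) (fun j : S => (j : Fin k))) ∧
      v = 1 / (∑ i : S, ∑ j : S,
        (M.submatrix (fun i : S => (i : Fin k)) (fun j : S => (j : Fin k)))⁻¹ i j) ∧
      IsLeast { x : ℝ | ∃ w : S → ℝ, (∀ i, 0 ≤ w i) ∧ (∑ i, w i) = 1 ∧
        x = ∑ i, ∑ j, w i *
          (M.submatrix (fun i : S => (i : Fin k)) (fun j : S => (j : Fin k))) i j * w j } v := by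
  rw [setOf_exists_eq_image_stdSimplex] at hv
  obtain ⟨⟨u₀, hu₀, hvu₀⟩, hlower⟩ := hv
  obtain ⟨u, hu, hmin, S, hS, hunit⟩ := exists_isMinOn_isUnit_submatrix_support hsymm
    (fun u hu => dotProduct_mulVec_pos_of_mem_stdSimplex hnonneg hdiag hu)
    (fun u hu => hvu₀ ▸ hlower ⟨u, hu, rfl⟩) hu₀
  obtain rfl : v = u ⬝ᵥ M *ᵥ u := le_antisymm (hlower ⟨u, hu, rfl⟩) (hvu₀ ▸ hmin hu₀)
  obtain ⟨i, -, hi⟩ := exists_ne_zero_of_sum_ne_zero (hu.2.trans_ne one_ne_zero)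
  refine ⟨S, ⟨i, by rw [← mem_coe, hS]; exact hi⟩, hunit, ?_, ?_⟩
  · exact eq_one_div_sum_inv_of_mulVec_eq_const hunit (hmin.submatrix_mulVec_restrict hsymm hu hS)
      ((sum_extend_coe _).symm.trans (by rw [extend_coe_restrict hS.ge, hu.2]))
  · rw [setOf_exists_eq_image_stdSimplex]
    exact hmin.isLeast_submatrix hu hS.ge

/-- **Quadratic programming lemma.** If `M` is a symmetric `k × k` matrix with
nonnegative entries and strictly positive diagonal, and `v` is the minimum of the
quadratic form `uᵀMu` over the standard simplex, then there is a nonempty subset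
`S` of indices such that the principal submatrix `M_S` is invertible,
`v = 1/(𝟙ᵀ M_S⁻¹ 𝟙)`, and `v` is also the minimum of the quadratic form of `M_S`
over the simplex indexed by `S`. -/
theorem qp_lemma (k : ℕ) (hk : 1 ≤ k) (M : Matrix (Fin k) (Fin k) ℝ)
    (hsymm : M.IsSymm) (hnonneg : ∀ i j, 0 ≤ M i j) (hdiag : ∀ i, 0 < M i i)
    (v : ℝ)
    (hv : IsLeast { x : ℝ | ∃ u : Fin k → ℝ, (∀ i, 0 ≤ u i) ∧ (∑ i, u i) = 1 ∧
      x = ∑ i, ∑ j, u i * M i j * u j } v) :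
    ∃ S : Finset (Fin k), S.Nonempty ∧
      IsUnit (M.submatrix (fun i : S => (i : Fin k)) (fun j : S => (j : Fin k))) ∧
      v = 1 / (∑ i : S, ∑ j : S,
        (M.submatrix (fun i : S => (i : Fin k)) (fun j : S => (j : Fin k)))⁻¹ i j) ∧
      IsLeast { x : ℝ | ∃ w : S → ℝ, (∀ i, 0 ≤ w i) ∧ (∑ i, w i) = 1 ∧
        x = ∑ i, ∑ j, w i *
          (M.submatrix (fun i : S => (i : Fin k)) (fun j : S => (j : Fin k))) i j * w j } v :=
  qp_lemma_general k M hsymm hnonneg hdiag v hv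
end
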